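/- arXiv:2406.18451 — 2 statements merged into one kernel-verified Lean document; each statement's English description precedes it below -/
import Mathlib

section
/- If the pair (d_in, d_out) is margin-consistent, then for every finite subset S of X and every real number ε ≥ 0 there exists a real threshold λ such that {x ∈ S : d_in(x) ≤ ε} = {x ∈ S : d_out(x) ≤ λ}; that is, the logit margin d_out perfectly separates the non-robust samples (those with d_in(x) ≤ ε) from the robust samples within any finite sample. -/
/-- If the pair `(d_in, d_out)` is margin-consistent, then for every finite subset `S` of `X`
and every `ε ≥ 0` there exists a real threshold `lam` such that
`{x ∈ S | d_in x ≤ ε} = {x ∈ S | d_out x ≤ lam}`. -/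
theorem margin_consistency_implies_separation {X : Type*} (d_in d_out : X → ℝ)
    (h_in_nonneg : ∀ x, 0 ≤ d_in x) (h_out_nonneg : ∀ x, 0 ≤ d_out x)
    (hmc : ∀ x₁ x₂ : X, d_in x₁ ≤ d_in x₂ ↔ d_out x₁ ≤ d_out x₂) :
    ∀ S : Set X, S.Finite → ∀ ε : ℝ, 0 ≤ ε →
      ∃ lam : ℝ, {x ∈ S | d_in x ≤ ε} = {x ∈ S | d_out x ≤ lam} := by
  intro S hS ε hε
  set A := {x ∈ S | d_in x ≤ ε} with hA
  by_cases hne : A.Nonempty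
  · have hAfin : A.Finite := hS.subset (fun x hx => hx.1)
    obtain ⟨x₀, hx₀A, hmax⟩ := hAfin.toFinset.exists_max_image d_in (by
      simpa [Set.Finite.toFinset_nonempty] using hne)
    rw [Set.Finite.mem_toFinset] at hx₀A
    have hmax' : ∀ x ∈ A, d_in x ≤ d_in x₀ := fun x hx =>
      hmax x (hAfin.mem_toFinset.mpr hx)
    refine ⟨d_out x₀, ?_⟩
    ext x
    constructor
    · rintro ⟨hxS, hxε⟩
      exact ⟨hxS, (hmc x x₀).mp (hmax' x ⟨hxS, hxε⟩)⟩
    · rintro ⟨hxS, hxo⟩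
      exact ⟨hxS, le_trans ((hmc x x₀).mpr hxo) hx₀A.2⟩
  · refine ⟨-1, ?_⟩
    ext x
    constructor
    · intro hx; exact absurd ⟨x, hx⟩ hne
    · rintro ⟨hxS, hxo⟩
      exact absurd (le_trans (h_out_nonneg x) hxo) (by norm_num)
end

section
/- Suppose z ∈ ℝ^m is classified as class i, i.e., f_i(z) > f_j(z) for all j ≠ i, and suppose the linear classifiers are equidistant: there exists C > 0 such that ‖w_i − w_j‖_q = C for every j ≠ i. Then the distance from z to the decision boundary in the feature space, namely min over j ≠ i of inf{‖η‖_p : η ∈ ℝ^m, z + η ∈ DB_ij}, equals (1/C) · (f_i(z) − max_{j ≠ i} f_j(z)), i.e., the logit margin divided by C. -/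
lemma sign_mul_self' (x : ℝ) : Real.sign x * x = |x| := by
  rcases lt_trichotomy x 0 with h | h | h
  · rw [Real.sign_of_neg h, abs_of_neg h]; ring
  · simp [h]
  · rw [Real.sign_of_pos h, abs_of_pos h]; ring

lemma hyperplane_dist {m : ℕ} {p q : ℝ} (hpq : p.HolderConjugate q)
    (v : Fin m → ℝ) (C : ℝ) (hC : 0 < C) (hv : (∑ l, |v l| ^ q) ^ (1 / q) = C) (c : ℝ) :
    sInf {r : ℝ | ∃ η : Fin m → ℝ, (∑ l, v l * η l) = c ∧ r = (∑ l, |η l| ^ p) ^ (1 / p)}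
      = |c| / C := by
  have hq0 : 0 < q := hpq.symm.pos
  have hq1 : q - 1 ≠ 0 := hpq.symm.sub_one_ne_zero
  set S : ℝ := ∑ l, |v l| ^ q with hS
  have hS0 : 0 ≤ S := Finset.sum_nonneg fun l _ => Real.rpow_nonneg (abs_nonneg _) _
  have hSpos : 0 < S := by
    rcases hS0.lt_or_eq with h | h
    · exact h
    · exfalso
      rw [← h, Real.zero_rpow (by positivity : (1:ℝ)/q ≠ 0)] at hv
      exact hC.ne hv
  -- Hölder lower bound
  have hlb : ∀ r ∈ {r : ℝ | ∃ η : Fin m → ℝ, (∑ l, v l * η l) = c ∧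
      r = (∑ l, |η l| ^ p) ^ (1 / p)}, |c| / C ≤ r := by
    rintro r ⟨η, hsum, rfl⟩
    rw [div_le_iff₀ hC, mul_comm]
    have h1 : (∑ l, v l * η l) ≤ C * (∑ l, |η l| ^ p) ^ (1 / p) := by
      have := Real.inner_le_Lp_mul_Lq Finset.univ v η hpq.symm
      rwa [hv] at this
    have h2 : (∑ l, v l * (-η l)) ≤ C * (∑ l, |η l| ^ p) ^ (1 / p) := by
      have := Real.inner_le_Lp_mul_Lq Finset.univ v (fun l => -η l) hpq.symm
      simp only [abs_neg] at this
      rwa [hv] at this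
    have hneg : (∑ l, v l * (-η l)) = -(∑ l, v l * η l) := by
      simp [mul_neg]
    rw [abs_le]
    constructor <;> [skip; rw [← hsum]] <;> [skip; exact h1]
    rw [hneg, hsum] at h2; linarith
  -- membership: the optimal η
  have hmem : |c| / C ∈ {r : ℝ | ∃ η : Fin m → ℝ, (∑ l, v l * η l) = c ∧
      r = (∑ l, |η l| ^ p) ^ (1 / p)} := by
    refine ⟨fun l => (c / S) * (Real.sign (v l) * |v l| ^ (q - 1)), ?_, ?_⟩
    · have key : ∀ l, v l * ((c / S) * (Real.sign (v l) * |v l| ^ (q - 1)))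
          = (c / S) * |v l| ^ q := by
        intro l
        have h1 : Real.sign (v l) * v l = |v l| := sign_mul_self' _
        have h2 : |v l| ^ q = |v l| * |v l| ^ (q - 1) := by
          have := Real.rpow_add' (abs_nonneg (v l)) (y := 1) (z := q - 1)
            (by rw [show (1:ℝ) + (q-1) = q by ring]; exact hq0.ne')
          rw [show (1:ℝ) + (q-1) = q by ring] at this
          simpa [Real.rpow_one] using this
        rw [h2, ← h1]; ring
      rw [Finset.sum_congr rfl (fun l _ => key l), ← Finset.mul_sum, ← hS,
        div_mul_cancel₀ _ hSpos.ne']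
    · have habs : ∀ l, |(c / S) * (Real.sign (v l) * |v l| ^ (q - 1))| ^ p
          = |c / S| ^ p * |v l| ^ q := by
        intro l
        by_cases h : v l = 0
        · simp [h, Real.zero_rpow hq1, Real.zero_rpow hq0.ne',
            Real.zero_rpow hpq.ne_zero]
        · have hs : |Real.sign (v l)| = 1 := by
            rcases lt_trichotomy (v l) 0 with h' | h' | h'
            · simp [Real.sign_of_neg h']
            · exact absurd h' h
            · simp [Real.sign_of_pos h']
          rw [abs_mul, abs_mul, hs, one_mul,
            abs_of_nonneg (Real.rpow_nonneg (abs_nonneg _) _),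
            Real.mul_rpow (abs_nonneg _) (Real.rpow_nonneg (abs_nonneg _) _),
            ← Real.rpow_mul (abs_nonneg _), hpq.symm.sub_one_mul_conj]
      rw [Finset.sum_congr rfl (fun l _ => habs l), ← Finset.mul_sum, ← hS,
        Real.mul_rpow (by positivity) hS0, ← Real.rpow_mul (abs_nonneg _),
        mul_one_div_cancel hpq.ne_zero, Real.rpow_one, abs_div, abs_of_pos hSpos]
      have h3 : |c| / S * S ^ ((1:ℝ)/p) = |c| * (S ^ ((1:ℝ)/p) * S ^ (-(1:ℝ))) := by
        rw [Real.rpow_neg_one]; ring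
      have h4 : S ^ ((1:ℝ)/p) * S ^ (-(1:ℝ)) = S ^ ((1:ℝ)/p - 1) := by
        rw [← Real.rpow_add hSpos]; ring_nf
      have h5 : (1:ℝ)/p - 1 = -(1/q) := by
        have := hpq.inv_add_inv_eq_one
        rw [one_div, one_div]; linarith
      rw [h3, h4, h5, Real.rpow_neg hS0, hv]
      rw [div_eq_mul_inv]
  exact le_antisymm (csInf_le ⟨|c| / C, hlb⟩ hmem) (le_csInf ⟨_, hmem⟩ hlb)



/-- If `z` is classified as class `i` (all other scores are strictly smaller) and the linear
classifiers are equidistant in the dual `ℓ_q` norm (`‖w i - w j‖_q = C` for all `j ≠ i`), then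
the `ℓ_p` distance from `z` to the decision boundary in feature space, i.e. the minimum over
`j ≠ i` of the distance to `DB_ij`, equals `(1 / C) * (f i z - max_{j ≠ i} f j z)`, the logit
margin divided by `C`. -/
theorem feature_margin_eq_logit_margin_div_C {m K : ℕ} (hm : 1 ≤ m) (hK : 2 ≤ K)
    (p q : ℝ) (hp : 1 < p) (hq : q = p / (p - 1))
    (w : Fin K → Fin m → ℝ) (b : Fin K → ℝ) (i : Fin K) (z : Fin m → ℝ)
    (hclass : ∀ j : Fin K, j ≠ i → (∑ l, w j l * z l + b j) < (∑ l, w i l * z l + b i))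
    (C : ℝ) (hC : 0 < C)
    (hequi : ∀ j : Fin K, j ≠ i → (∑ l, |w i l - w j l| ^ q) ^ (1 / q) = C) :
    (⨅ j : {j : Fin K // j ≠ i},
        sInf {r : ℝ | ∃ η : Fin m → ℝ,
          (∑ l, w i l * (z l + η l) + b i) = (∑ l, w (j : Fin K) l * (z l + η l) + b (j : Fin K)) ∧
          r = (∑ l, |η l| ^ p) ^ (1 / p)}) =
      (1 / C) * ((∑ l, w i l * z l + b i) -
        ⨆ j : {j : Fin K // j ≠ i}, (∑ l, w (j : Fin K) l * z l + b (j : Fin K))) := by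
  have hpq : p.HolderConjugate q := (Real.holderConjugate_iff_eq_conjExponent hp).mpr hq
  have hne : Nonempty {j : Fin K // j ≠ i} := by
    obtain ⟨j, hj⟩ := Fintype.exists_ne_of_one_lt_card (by simp; omega) i
    exact ⟨⟨j, hj⟩⟩
  set a : ℝ := ∑ l, w i l * z l + b i with ha
  set h : {j : Fin K // j ≠ i} → ℝ := fun j => ∑ l, w (j : Fin K) l * z l + b (j : Fin K) with hh
  -- each term of the infimum equals (a - h j) / C
  have hterm : ∀ j : {j : Fin K // j ≠ i},
      sInf {r : ℝ | ∃ η : Fin m → ℝ,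
          (∑ l, w i l * (z l + η l) + b i) = (∑ l, w (j : Fin K) l * (z l + η l) + b (j : Fin K)) ∧
          r = (∑ l, |η l| ^ p) ^ (1 / p)} = (a - h j) / C := by
    intro j
    have hset : {r : ℝ | ∃ η : Fin m → ℝ,
          (∑ l, w i l * (z l + η l) + b i) = (∑ l, w (j : Fin K) l * (z l + η l) + b (j : Fin K)) ∧
          r = (∑ l, |η l| ^ p) ^ (1 / p)}
        = {r : ℝ | ∃ η : Fin m → ℝ, (∑ l, (w i l - w (j:Fin K) l) * η l) = h j - a ∧
          r = (∑ l, |η l| ^ p) ^ (1 / p)} := by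
      ext r
      have hiff : ∀ η : Fin m → ℝ,
          ((∑ l, w i l * (z l + η l) + b i) = (∑ l, w (j : Fin K) l * (z l + η l) + b (j : Fin K)))
          ↔ (∑ l, (w i l - w (j:Fin K) l) * η l) = h j - a := by
        intro η
        have e1 : ∀ k : Fin K, (∑ l, w k l * (z l + η l)) = (∑ l, w k l * z l) + ∑ l, w k l * η l := by
          intro k; rw [← Finset.sum_add_distrib]; exact Finset.sum_congr rfl fun l _ => by ring
        have e2 : (∑ l, (w i l - w (j:Fin K) l) * η l)
            = (∑ l, w i l * η l) - ∑ l, w (j:Fin K) l * η l := by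
          rw [← Finset.sum_sub_distrib]; exact Finset.sum_congr rfl fun l _ => by ring
        rw [e1, e1, e2, ha, hh]
        constructor <;> intro hx <;> simp only at hx ⊢ <;> linarith
      exact ⟨fun ⟨η, h1, h2⟩ => ⟨η, (hiff η).mp h1, h2⟩, fun ⟨η, h1, h2⟩ => ⟨η, (hiff η).mpr h1, h2⟩⟩
    rw [hset, hyperplane_dist hpq _ C hC (hequi j j.2) _]
    rw [abs_of_neg (by have := hclass j j.2; simp only [ha, hh]; linarith), neg_sub]
  -- compute the infimum
  have hbddA : BddAbove (Set.range h) := Set.Finite.bddAbove (Set.finite_range h)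
  obtain ⟨j₀, hj₀⟩ := Finite.exists_max h
  have hsup : (⨆ j, h j) = h j₀ := le_antisymm (ciSup_le hj₀) (le_ciSup hbddA j₀)
  calc (⨅ j : {j : Fin K // j ≠ i}, sInf {r : ℝ | ∃ η : Fin m → ℝ,
          (∑ l, w i l * (z l + η l) + b i) = (∑ l, w (j : Fin K) l * (z l + η l) + b (j : Fin K)) ∧
          r = (∑ l, |η l| ^ p) ^ (1 / p)})
      = ⨅ j : {j : Fin K // j ≠ i}, (a - h j) / C := by
        exact iInf_congr hterm
    _ = (1 / C) * (a - ⨆ j, h j) := by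
        apply le_antisymm
        · refine le_trans (ciInf_le (Set.Finite.bddBelow (Set.finite_range _)) j₀) ?_
          rw [hsup, one_div, inv_mul_eq_div]
        · refine le_ciInf fun j => ?_
          rw [one_div, inv_mul_eq_div]
          apply div_le_div_of_nonneg_right ?_ hC.le
          exact sub_le_sub_left (le_ciSup hbddA j) a
end
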